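/- arXiv:2303.02533 — 3 statements merged into one kernel-verified Lean document; each statement's English description precedes it below -/
import Mathlib

section
/- Let G be a group, H ≤ G a subgroup, and x, x₁, …, x_t ∈ G such that the right coset H*x is contained in the union of the left cosets x₁*H ∪ … ∪ x_t*H. Then the subgroup H ∩ x*H*x⁻¹ = {h ∈ H : x⁻¹*h*x ∈ H} has finite index in H. -/
/-!
The subgroup `{h ∈ H : x⁻¹ * h * x ∈ H}` is the stabilizer of the coset `x * H` under the
left-translation action of `H` on `G ⧸ H`. The covering hypothesis says that the orbit
`{h * x * H : h ∈ H}` lies among the finitely many cosets `xᵢ * H`, so orbit–stabilizer gives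
a finite index.
-/

open MulAction

theorem MulAction.finiteIndex_stabilizer_of_finite_orbit {G X : Type*} [Group G] [MulAction G X]
    {x : X} (h : (orbit G x).Finite) : (stabilizer G x).FiniteIndex := by
  have := h.to_subtype
  have : Finite (G ⧸ stabilizer G x) := .of_equiv _ (orbitEquivQuotientStabilizer G x)
  exact Subgroup.finiteIndex_of_finite_quotient

theorem Subgroup.comap_conj_inv_comp_subtype_eq_stabilizer {G : Type*} [Group G]
    (H K : Subgroup G) (x : G) :
    comap ((MulAut.conj x⁻¹).toMonoidHom.comp H.subtype) K = stabilizer H (x : G ⧸ K) := by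
  ext h
  change _ ↔ ((h * x : G) : G ⧸ K) = x
  rw [eq_comm, QuotientGroup.eq]
  simp [mul_assoc]

/-- If the right coset `H*x` is covered by finitely many left cosets `xᵢ*H`, then
`{h ∈ H : x⁻¹*h*x ∈ H}` has finite index in `H`. -/
theorem stmt5 {G : Type*} [Group G] (H : Subgroup G) (x : G) (t : ℕ) (xs : Fin t → G)
    (hcov : {y : G | ∃ h ∈ H, y = h * x} ⊆ ⋃ i : Fin t, {y : G | ∃ h ∈ H, y = xs i * h}) :
    (Subgroup.comap ((MulAut.conj x⁻¹).toMonoidHom.comp H.subtype) H).FiniteIndex := by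
  rw [Subgroup.comap_conj_inv_comp_subtype_eq_stabilizer]
  have horbit : orbit H (x : G ⧸ H) ⊆ Set.range fun i ↦ (xs i : G ⧸ H) := by
    rintro _ ⟨h, rfl⟩
    obtain ⟨i, k, hk, hhx⟩ := Set.mem_iUnion.mp (hcov ⟨h, h.2, rfl⟩)
    exact ⟨i, QuotientGroup.eq.mpr (by simpa [hhx] using hk)⟩
  exact finiteIndex_stabilizer_of_finite_orbit ((Set.finite_range _).subset horbit)
end

section
/- Let X be a Hausdorff topological space and f : X → X an injective map. Suppose S is a set of bijections of X, each commuting with f, such that for every point x ∈ X and every open neighborhood U of x there exists g ∈ S with x ∈ supp(g) ⊆ U, where supp(g) = {y : g y ≠ y}. Then f is the identity map. -/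
open Function

theorem Function.Commute.mapsTo_compl_fixedPoints {α : Type*} {f g : α → α}
    (h : Function.Commute f g) (hf : Injective f) :
    Set.MapsTo f (fixedPoints g)ᶜ (fixedPoints g)ᶜ :=
  fun x hx hfx => hx (hf ((h x).trans hfx))

/-- If `f` is an injective self-map of a Hausdorff space commuting with a family of
bijections whose supports form a neighborhood basis at every point, then `f = id`. -/
theorem stmt10 {X : Type*} [TopologicalSpace X] [T2Space X]
    (f : X → X) (hf : Function.Injective f) (S : Set (Equiv.Perm X))
    (hcomm : ∀ g ∈ S, ∀ x, f (g x) = g (f x))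
    (hloc : ∀ x : X, ∀ U : Set X, IsOpen U → x ∈ U →
      ∃ g ∈ S, x ∈ {y | g y ≠ y} ∧ {y | g y ≠ y} ⊆ U) :
    ∀ x, f x = x := by
  intro x
  by_contra hne
  obtain ⟨U, V, hU, -, hxU, hfxV, hUV⟩ := t2_separation (Ne.symm hne)
  obtain ⟨g, hgS, hxg, hsupp⟩ := hloc x U hU hxU
  have hfxg : f x ∈ (fixedPoints g)ᶜ :=
    Function.Commute.mapsTo_compl_fixedPoints (hcomm g hgS) hf hxg
  exact Set.disjoint_left.mp hUV (hsupp hfxg) hfxV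
end

section
/- Let x and f be commuting self-homeomorphisms of the closed interval [0,1] with x(0) = 0. Suppose t₀ ∈ [0,1] with t₀ < x(t₀), and suppose f(t) = t for every t outside the open interval (t₀, x(t₀)). Then f is the identity. -/
/-! Since `x` fixes `0` it is increasing, so every `t ∈ (t₀, x t₀)` is `x s` with `s < t₀`.
Such an `s` is fixed by `f`, and fixed points of `f` are carried to fixed points by the
commuting map `x`; hence `t = x s` is fixed as well. -/

open Function Set

theorem Homeomorph.strictMono_of_map_bot {α : Type*} [ConditionallyCompleteLinearOrder α]
    [TopologicalSpace α] [OrderTopology α] [DenselyOrdered α] [BoundedOrder α]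
    (e : α ≃ₜ α) (he : e ⊥ = ⊥) : StrictMono e :=
  e.continuous.strictMono_of_inj_boundedOrder (he.trans_le bot_le) e.injective

theorem eq_self_of_commute_of_eq_self_outside_Ioo {α : Type*} [LinearOrder α] (x : α ≃o α)
    {f : α → α} (hcomm : Function.Commute x f) (t₀ : α)
    (hfix : ∀ t ∉ Ioo t₀ (x t₀), f t = t) (t : α) : f t = t := by
  by_cases ht : t ∈ Ioo t₀ (x t₀)
  · have hs : x.symm t < t₀ := x.symm_apply_lt.mpr ht.2
    have hfs : IsFixedPt f (x.symm t) := hfix _ fun h => h.1.not_gt hs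
    simpa using (hfs.map hcomm).eq
  · exact hfix t ht

theorem stmt11_general (x f : Homeomorph unitInterval unitInterval)
    (hcomm : ∀ t, x (f t) = f (x t)) (hx0 : x 0 = 0)
    (t₀ : unitInterval)
    (hfix : ∀ t : unitInterval, ¬(t₀ < t ∧ t < x t₀) → f t = t) :
    ∀ t, f t = t :=
  have hmono : StrictMono x := x.strictMono_of_map_bot hx0
  eq_self_of_commute_of_eq_self_outside_Ioo (hmono.orderIsoOfSurjective x x.surjective) hcomm t₀
    hfix

/-- Commuting self-homeomorphisms of `[0,1]`: if `x(0) = 0`, `t₀ < x(t₀)` and `f`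
fixes every point outside the open interval `(t₀, x(t₀))`, then `f` is the identity. -/
theorem stmt11 (x f : Homeomorph unitInterval unitInterval)
    (hcomm : ∀ t, x (f t) = f (x t)) (hx0 : x 0 = 0)
    (t₀ : unitInterval) (ht₀ : t₀ < x t₀)
    (hfix : ∀ t : unitInterval, ¬(t₀ < t ∧ t < x t₀) → f t = t) :
    ∀ t, f t = t :=
  stmt11_general x f hcomm hx0 t₀ hfix
end
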